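/- In a linear outcome model with two conditionally independent mediators, the IE decomposition is order-invariant: the component attributed to mediator W1 is the same whether W1 is processed first or second in the topological ordering. Specifically, both ordering conventions yield the value Σ_z P(z) Σ_{w1} φ1(w1,z)(P(w1|x1,z) - P(w1|x0,z)) for W1's contribution. -/

import Mathlib

/-!
For each `z`, the `φ1` part of the sum is weighted by the total mass `∑ w2, P(w2|x,z) = 1`, while
the `φ2` part is weighted by `∑ w1, (P(w1|x1,z) - P(w1|x0,z)) = 0`. So the distribution of `W2`,
and with it the ordering of the mediators, drops out.
-/

open Finset

section

variable {R ι κ : Type*} [CommSemiring R] (s : Finset ι) (t : Finset κ)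
  (a d : ι → R) (b q : κ → R)

theorem sum_sum_add_mul_mul :
    ∑ i ∈ s, ∑ j ∈ t, (a i + b j) * d i * q j
      = (∑ i ∈ s, a i * d i) * ∑ j ∈ t, q j
        + (∑ i ∈ s, d i) * ∑ j ∈ t, b j * q j := by
  rw [sum_mul_sum, sum_mul_sum, ← sum_add_distrib]
  refine sum_congr rfl fun i _ => ?_
  rw [← sum_add_distrib]
  exact sum_congr rfl fun j _ => by ring

theorem sum_sum_add_mul_mul_of_sum_eq_zero_of_sum_eq_one
    (hd : ∑ i ∈ s, d i = 0) (hq : ∑ j ∈ t, q j = 1) :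
    ∑ i ∈ s, ∑ j ∈ t, (a i + b j) * d i * q j = ∑ i ∈ s, a i * d i := by
  rw [sum_sum_add_mul_mul, hd, hq, mul_one, zero_mul, add_zero]

end

theorem ie_component_order_invariant_general
    {X Z W1 W2 : Type*} [Fintype Z] [Fintype W1] [Fintype W2]
    (x0 x1 : X)
    (Pz : Z → ℝ)
    (P1 : X → Z → W1 → ℝ) (hP1 : ∀ x z, ∑ w1, P1 x z w1 = 1)
    (P2 : X → Z → W2 → ℝ) (hP2 : ∀ x z, ∑ w2, P2 x z w2 = 1)
    (φ1 : W1 → Z → ℝ) (φ2 : W2 → Z → ℝ) :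
    (∑ z, Pz z * ∑ w1, ∑ w2,
        (φ1 w1 z + φ2 w2 z) * (P1 x1 z w1 - P1 x0 z w1) * P2 x0 z w2)
      = ∑ z, Pz z * ∑ w1, φ1 w1 z * (P1 x1 z w1 - P1 x0 z w1)
    ∧
    (∑ z, Pz z * ∑ w1, ∑ w2,
        (φ1 w1 z + φ2 w2 z) * (P1 x1 z w1 - P1 x0 z w1) * P2 x1 z w2)
      = ∑ z, Pz z * ∑ w1, φ1 w1 z * (P1 x1 z w1 - P1 x0 z w1) := by
  have hdiff : ∀ z, ∑ w1, (P1 x1 z w1 - P1 x0 z w1) = 0 := fun z => by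
    rw [sum_sub_distrib, hP1, hP1, sub_self]
  have component (x : X) :
      (∑ z, Pz z * ∑ w1, ∑ w2,
          (φ1 w1 z + φ2 w2 z) * (P1 x1 z w1 - P1 x0 z w1) * P2 x z w2)
        = ∑ z, Pz z * ∑ w1, φ1 w1 z * (P1 x1 z w1 - P1 x0 z w1) :=
    sum_congr rfl fun z _ => congrArg (Pz z * ·) <|
      sum_sum_add_mul_mul_of_sum_eq_zero_of_sum_eq_one _ _ (φ1 · z)
        (fun w1 => P1 x1 z w1 - P1 x0 z w1) (φ2 · z) (P2 x z) (hdiff z) (hP2 x z)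
  exact ⟨component x0, component x1⟩

/-- Order-invariance of the IE decomposition in a linear outcome
model with two conditionally independent mediators: under either ordering
(W1,W2) or (W2,W1), the component attributed to W1 equals
Σ_z P(z) Σ_{w1} φ1(w1,z)(P(w1|x1,z) - P(w1|x0,z)). -/
theorem ie_component_order_invariant
    {X Z W1 W2 : Type*} [Fintype Z] [Fintype W1] [Fintype W2]
    (x0 x1 : X)
    (Pz : Z → ℝ) (hPz : ∑ z, Pz z = 1)
    (P1 : X → Z → W1 → ℝ) (hP1 : ∀ x z, ∑ w1, P1 x z w1 = 1)
    (P2 : X → Z → W2 → ℝ) (hP2 : ∀ x z, ∑ w2, P2 x z w2 = 1)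
    (φ1 : W1 → Z → ℝ) (φ2 : W2 → Z → ℝ) :
    (∑ z, Pz z * ∑ w1, ∑ w2,
        (φ1 w1 z + φ2 w2 z) * (P1 x1 z w1 - P1 x0 z w1) * P2 x0 z w2)
      = ∑ z, Pz z * ∑ w1, φ1 w1 z * (P1 x1 z w1 - P1 x0 z w1)
    ∧
    (∑ z, Pz z * ∑ w1, ∑ w2,
        (φ1 w1 z + φ2 w2 z) * (P1 x1 z w1 - P1 x0 z w1) * P2 x1 z w2)
      = ∑ z, Pz z * ∑ w1, φ1 w1 z * (P1 x1 z w1 - P1 x0 z w1) :=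
  ie_component_order_invariant_general x0 x1 Pz P1 hP1 P2 hP2 φ1 φ2
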